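/- For every integer n ≥ 1, the quotient topological space (S¹)ⁿ / A_n, obtained from the n-torus by collapsing the subspace A_n to a point, is homeomorphic to the n-sphere Sⁿ. -/
import Mathlib


/-- The setoid on `X` that collapses the subset `A` to a single point:
`x ≈ y` iff `x = y` or both `x` and `y` lie in `A`. -/
def collapseSetoid {X : Type*} (A : Set X) : Setoid X where
  r x y := x = y ∨ (x ∈ A ∧ y ∈ A)
  iseqv := by
    constructor
    · intro x; exact Or.inl rfl
    · rintro x y (rfl | h); · exact Or.inl rfl
      · exact Or.inr ⟨h.2, h.1⟩
    · rintro x y z (rfl | h) (rfl | h')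
      · exact Or.inl rfl
      · exact Or.inr h'
      · exact Or.inr h
      · exact Or.inr ⟨h.1, h'.2⟩

/-- The subset `A n` of the `n`-torus consisting of points having at least one
coordinate at the basepoint `1`. -/
def torusSkeletonSet (n : ℕ) : Set (Fin n → Circle) :=
  {z | ∃ i, z i = 1}

open Set Metric OnePoint Topology

section Collapse

variable {X : Type*} [TopologicalSpace X] [T2Space X] [CompactSpace X]

/-- The raw map from `X` to the one-point compactification of `Aᶜ`. -/
noncomputable def collapseToOnePoint (A : Set X) [∀ x, Decidable (x ∈ A)] (x : X) :
    OnePoint ↥(Aᶜ : Set X) :=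
  if h : x ∈ A then ∞ else ((⟨x, h⟩ : ↥(Aᶜ : Set X)) : OnePoint ↥(Aᶜ : Set X))

omit [CompactSpace X] in
theorem continuous_collapseToOnePoint {A : Set X} [∀ x, Decidable (x ∈ A)]
    (hA : IsClosed A) : Continuous (collapseToOnePoint A) := by
  rw [continuous_def]
  intro s hs
  have hpre : IsOpen ((↑) ⁻¹' s : Set ↥(Aᶜ : Set X)) := (OnePoint.isOpen_def.mp hs).2
  by_cases hinf : ∞ ∈ s
  · have hK : IsCompact (((↑) ⁻¹' s : Set ↥(Aᶜ : Set X))ᶜ) :=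
      (OnePoint.isOpen_def.mp hs).1 hinf
    have heq : collapseToOnePoint A ⁻¹' s =
        (Subtype.val '' (((↑) ⁻¹' s : Set ↥(Aᶜ : Set X))ᶜ))ᶜ := by
      ext x
      simp only [mem_preimage, mem_compl_iff, mem_image, not_exists, not_and]
      constructor
      · intro hxs u hu hval
        apply hu
        have hxA : u.val ∉ A := u.2
        rw [← hval] at hxs
        simpa [collapseToOnePoint, hxA, Subtype.eta] using hxs
      · intro hx
        by_cases hxA : x ∈ A
        · simpa [collapseToOnePoint, hxA] using hinf
        · have hmem : (⟨x, hxA⟩ : ↥(Aᶜ : Set X)) ∈ ((↑) ⁻¹' s : Set ↥(Aᶜ : Set X)) := by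
            by_contra hmem
            exact hx ⟨x, hxA⟩ hmem rfl
          simpa [collapseToOnePoint, hxA] using hmem
    rw [heq]
    exact (hK.image continuous_subtype_val).isClosed.isOpen_compl
  · have heq : collapseToOnePoint A ⁻¹' s =
        Subtype.val '' ((↑) ⁻¹' s : Set ↥(Aᶜ : Set X)) := by
      ext x
      by_cases hx : x ∈ A
      · simp only [mem_preimage, collapseToOnePoint, hx, dif_pos, mem_image]
        constructor
        · intro h; exact absurd h hinf
        · rintro ⟨u, _, rfl⟩
          exact absurd hx u.2
      · simp only [mem_preimage, collapseToOnePoint, hx, dif_neg, mem_image]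
        constructor
        · intro h; exact ⟨⟨x, hx⟩, h, rfl⟩
        · rintro ⟨u, hu, hval⟩
          have : u = ⟨x, hx⟩ := Subtype.ext hval
          rwa [this] at hu
    rw [heq]
    exact hA.isOpen_compl.isOpenMap_subtype_val _ hpre

/-- Collapsing a closed nonempty subset `A` of a compact Hausdorff space to a point yields
the one-point compactification of the complement of `A`. -/
noncomputable def collapseHomeoOnePoint {A : Set X} (hA : IsClosed A) (hne : A.Nonempty) :
    Quotient (collapseSetoid A) ≃ₜ OnePoint ↥(Aᶜ : Set X) := by
  classical
  haveI : LocallyCompactSpace ↥(Aᶜ : Set X) := hA.isOpen_compl.locallyCompactSpace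
  have hresp : ∀ x y, (collapseSetoid A).r x y →
      collapseToOnePoint A x = collapseToOnePoint A y := by
    rintro x y (rfl | ⟨hx, hy⟩)
    · rfl
    · simp [collapseToOnePoint, hx, hy]
  let g : Quotient (collapseSetoid A) → OnePoint ↥(Aᶜ : Set X) :=
    Quotient.lift (collapseToOnePoint A) hresp
  have hg : Continuous g := (continuous_collapseToOnePoint hA).quotient_lift hresp
  have hbij : Function.Bijective g := by
    constructor
    · intro a b
      induction a using Quotient.ind
      induction b using Quotient.ind
      rename_i x y
      intro h
      change collapseToOnePoint A x = collapseToOnePoint A y at h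
      apply Quotient.sound
      by_cases hx : x ∈ A <;> by_cases hy : y ∈ A
      · exact Or.inr ⟨hx, hy⟩
      · simp [collapseToOnePoint, hx, hy] at h
      · simp [collapseToOnePoint, hx, hy] at h
      · unfold collapseToOnePoint at h
        rw [dif_neg hx, dif_neg hy, OnePoint.coe_eq_coe] at h
        exact Or.inl (congrArg Subtype.val h)
    · intro z
      induction z using OnePoint.rec with
      | infty =>
        obtain ⟨a, ha⟩ := hne
        exact ⟨⟦a⟧, by simp [g, collapseToOnePoint, ha]⟩
      | coe u =>
        refine ⟨⟦u.val⟧, ?_⟩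
        have hu : u.val ∉ A := u.2
        simp [g, collapseToOnePoint, hu]
  exact Continuous.homeoOfEquivCompactToT2 (f := Equiv.ofBijective g hbij) hg

end Collapse

section SphereSide

local notation "𝔼" n => EuclideanSpace ℝ (Fin n)

/-- Stereographic projection as a homeomorphism from the complement of a point on the
sphere to Euclidean space. -/
noncomputable def sphereComplHomeo (n : ℕ) (v : sphere (0 : 𝔼 (n + 1)) 1) :
    ↥({v}ᶜ : Set (sphere (0 : 𝔼 (n + 1)) 1)) ≃ₜ 𝔼 n :=
  haveI : Fact (Module.finrank ℝ (𝔼 (n + 1)) = n + 1) := ⟨finrank_euclideanSpace_fin⟩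
  (Homeomorph.setCongr (stereographic'_source v).symm).trans <|
    (stereographic' n v).toHomeomorphSourceTarget.trans <|
      (Homeomorph.setCongr (stereographic'_target v)).trans (Homeomorph.Set.univ _)

/-- A preferred point on the sphere. -/
noncomputable def spherePt (n : ℕ) : sphere (0 : 𝔼 (n + 1)) 1 :=
  ⟨EuclideanSpace.single 0 1, by simp [mem_sphere_zero_iff_norm, EuclideanSpace.norm_single]⟩

/-- The sphere `Sⁿ` is the one-point compactification of `ℝⁿ`. -/
noncomputable def onePointHomeoSphere (n : ℕ) :
    OnePoint (𝔼 n) ≃ₜ sphere (0 : 𝔼 (n + 1)) 1 := by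
  refine OnePoint.equivOfIsEmbeddingOfRangeEq (spherePt n)
    (Subtype.val ∘ (sphereComplHomeo n (spherePt n)).symm)
    (IsEmbedding.subtypeVal.comp (sphereComplHomeo n (spherePt n)).symm.isEmbedding) ?_
  rw [Set.range_comp, (sphereComplHomeo n (spherePt n)).symm.surjective.range_eq,
    Set.image_univ, Subtype.range_val]

end SphereSide

section CircleSide

local notation "𝔼" n => EuclideanSpace ℝ (Fin n)

/-- The circle is homeomorphic to the unit sphere in `ℝ²`. -/
noncomputable def circleHomeoSphere : Circle ≃ₜ sphere (0 : 𝔼 2) 1 where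
  toFun z := ⟨Complex.orthonormalBasisOneI.repr z, by
    rw [mem_sphere_zero_iff_norm, LinearIsometryEquiv.norm_map]
    exact mem_sphere_zero_iff_norm.mp z.2⟩
  invFun w := ⟨Complex.orthonormalBasisOneI.repr.symm w.val, by
    show Complex.orthonormalBasisOneI.repr.symm w.val ∈ Metric.sphere (0 : ℂ) 1
    rw [mem_sphere_zero_iff_norm, LinearIsometryEquiv.norm_map]
    exact mem_sphere_zero_iff_norm.mp w.2⟩
  left_inv _ :=
    Subtype.ext (Complex.orthonormalBasisOneI.repr.symm_apply_apply _)
  right_inv _ :=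
    Subtype.ext (Complex.orthonormalBasisOneI.repr.apply_symm_apply _)
  continuous_toFun := by
    apply Continuous.subtype_mk
    exact Complex.orthonormalBasisOneI.repr.continuous.comp continuous_subtype_val
  continuous_invFun := by
    apply Continuous.subtype_mk
    exact Complex.orthonormalBasisOneI.repr.symm.continuous.comp continuous_subtype_val

/-- The circle minus its basepoint is homeomorphic to `ℝ`. -/
noncomputable def circleComplHomeoReal : ↥({1}ᶜ : Set Circle) ≃ₜ ℝ := by
  refine (circleHomeoSphere.image ({1}ᶜ)).trans <|
    (Homeomorph.setCongr ?_).trans <|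
      (sphereComplHomeo 1 (circleHomeoSphere 1)).trans <|
        (EuclideanSpace.equiv (Fin 1) ℝ).toHomeomorph.trans (Homeomorph.funUnique (Fin 1) ℝ)
  rw [Set.image_compl_eq circleHomeoSphere.bijective, Set.image_singleton]

end CircleSide

section TorusSide

theorem isClosed_torusSkeletonSet (n : ℕ) : IsClosed (torusSkeletonSet n) := by
  have : torusSkeletonSet n = ⋃ i : Fin n, {z : Fin n → Circle | z i = 1} := by
    ext z; simp [torusSkeletonSet]
  rw [this]
  exact isClosed_iUnion_of_finite fun i =>
    isClosed_singleton.preimage (continuous_apply i)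

theorem torusSkeletonSet_nonempty (n : ℕ) (hn : 1 ≤ n) : (torusSkeletonSet n).Nonempty :=
  ⟨fun _ => 1, ⟨⟨0, hn⟩, rfl⟩⟩

/-- The complement of the skeleton is the product of the punctured circles. -/
noncomputable def torusComplHomeo (n : ℕ) :
    ↥((torusSkeletonSet n)ᶜ : Set (Fin n → Circle)) ≃ₜ (Fin n → ↥({1}ᶜ : Set Circle)) where
  toFun z i := ⟨z.val i, fun h => z.2 ⟨i, h⟩⟩
  invFun w := ⟨fun i => (w i).val, fun ⟨i, hi⟩ => (w i).2 hi⟩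
  left_inv _ := rfl
  right_inv _ := rfl
  continuous_toFun := continuous_pi fun i =>
    ((continuous_apply i).comp continuous_subtype_val).subtype_mk _
  continuous_invFun :=
    (continuous_pi fun i => continuous_subtype_val.comp (continuous_apply i)).subtype_mk _

end TorusSide

/-- The quotient `(S¹)ⁿ / A_n` of the `n`-torus obtained by collapsing to a point the
subspace `A_n` of points with at least one coordinate at the basepoint, equipped with
the quotient topology, is homeomorphic to the `n`-sphere, i.e. the unit sphere
in `ℝ^{n+1}`. -/
theorem torus_quotient_skeleton_homeo_sphere (n : ℕ) (hn : 1 ≤ n) :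
    Nonempty
      (Quotient (collapseSetoid (torusSkeletonSet n)) ≃ₜ
        Metric.sphere (0 : EuclideanSpace ℝ (Fin (n + 1))) 1) := by
  refine ⟨(collapseHomeoOnePoint (isClosed_torusSkeletonSet n)
      (torusSkeletonSet_nonempty n hn)).trans <|
    (Homeomorph.onePointCongr ?_).trans (onePointHomeoSphere n)⟩
  exact (torusComplHomeo n).trans <|
    (Homeomorph.piCongrRight fun _ => circleComplHomeoReal).trans
      (EuclideanSpace.equiv (Fin n) ℝ).symm.toHomeomorph
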